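/- arXiv:1202.6489 — 2 statements merged into one kernel-verified Lean document; each statement's English description precedes it below -/
import Mathlib

section
/- Prop: Let H₀, H₁ be complex Hilbert spaces, H := H₀ ⊕ H₁, and let F ∈ B(H) have block-matrix form [[k, m], [l, w − 1]]. Then q(F) = 0 if and only if w is an isometry, k* + k + l*l = 0 and m = −l*w. -/
set_option synthInstance.maxHeartbeats 1000000
set_option maxHeartbeats 1000000

noncomputable section

open ContinuousLinearMap

variable {H₀ H₁ : Type*} [NormedAddCommGroup H₀] [InnerProductSpace ℂ H₀] [CompleteSpace H₀]
  [NormedAddCommGroup H₁] [InnerProductSpace ℂ H₁] [CompleteSpace H₁]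

/-- The inclusion of the first summand into the Hilbert-space direct sum `H₀ ⊕ H₁`. -/
def inlL : H₀ →L[ℂ] WithLp 2 (H₀ × H₁) :=
  ((WithLp.prodContinuousLinearEquiv 2 ℂ H₀ H₁).symm.toContinuousLinearMap).comp
    (ContinuousLinearMap.inl ℂ H₀ H₁)

/-- The inclusion of the second summand into the Hilbert-space direct sum `H₀ ⊕ H₁`. -/
def inrL : H₁ →L[ℂ] WithLp 2 (H₀ × H₁) :=
  ((WithLp.prodContinuousLinearEquiv 2 ℂ H₀ H₁).symm.toContinuousLinearMap).comp
    (ContinuousLinearMap.inr ℂ H₀ H₁)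

/-- The projection of the Hilbert-space direct sum `H₀ ⊕ H₁` onto the first summand. -/
def fstL : WithLp 2 (H₀ × H₁) →L[ℂ] H₀ :=
  (ContinuousLinearMap.fst ℂ H₀ H₁).comp
    (WithLp.prodContinuousLinearEquiv 2 ℂ H₀ H₁).toContinuousLinearMap

/-- The projection of the Hilbert-space direct sum `H₀ ⊕ H₁` onto the second summand. -/
def sndL : WithLp 2 (H₀ × H₁) →L[ℂ] H₁ :=
  (ContinuousLinearMap.snd ℂ H₀ H₁).comp
    (WithLp.prodContinuousLinearEquiv 2 ℂ H₀ H₁).toContinuousLinearMap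

/-- `Δ`: the orthogonal projection of `H₀ ⊕ H₁` onto the second summand `H₁`. -/
def Delta (H₀ H₁ : Type*) [NormedAddCommGroup H₀] [InnerProductSpace ℂ H₀] [CompleteSpace H₀]
    [NormedAddCommGroup H₁] [InnerProductSpace ℂ H₁] [CompleteSpace H₁] :
    WithLp 2 (H₀ × H₁) →L[ℂ] WithLp 2 (H₀ × H₁) :=
  inrL.comp sndL

/-- `Δ⊥ = 1 - Δ`: the orthogonal projection of `H₀ ⊕ H₁` onto the first summand `H₀`. -/
def DeltaPerp (H₀ H₁ : Type*) [NormedAddCommGroup H₀] [InnerProductSpace ℂ H₀] [CompleteSpace H₀]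
    [NormedAddCommGroup H₁] [InnerProductSpace ℂ H₁] [CompleteSpace H₁] :
    WithLp 2 (H₀ × H₁) →L[ℂ] WithLp 2 (H₀ × H₁) :=
  1 - Delta H₀ H₁

/-- `q(F) := F* + F + F* Δ F`. -/
def qOp (F : WithLp 2 (H₀ × H₁) →L[ℂ] WithLp 2 (H₀ × H₁)) :
    WithLp 2 (H₀ × H₁) →L[ℂ] WithLp 2 (H₀ × H₁) :=
  star F + F + star F * (Delta H₀ H₁ * F)

set_option linter.unusedSectionVars false

lemma decompL : (inlL ∘L fstL + inrL ∘L sndL : WithLp 2 (H₀ × H₁) →L[ℂ] WithLp 2 (H₀ × H₁)) = 1 := by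
  refine ContinuousLinearMap.ext fun x => ?_
  refine (WithLp.prodContinuousLinearEquiv 2 ℂ H₀ H₁).injective ?_
  ext <;> simp [inlL, inrL, fstL, sndL]

lemma adj_inlL : adjoint (inlL : H₀ →L[ℂ] WithLp 2 (H₀ × H₁)) = fstL := by
  symm
  rw [ContinuousLinearMap.eq_adjoint_iff]
  intro x y
  simp [fstL, inlL, WithLp.prod_inner_apply]

lemma adj_inrL : adjoint (inrL : H₁ →L[ℂ] WithLp 2 (H₀ × H₁)) = sndL := by
  symm
  rw [ContinuousLinearMap.eq_adjoint_iff]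
  intro x y
  simp [sndL, inrL, WithLp.prod_inner_apply]

lemma adj_fstL : adjoint (fstL : WithLp 2 (H₀ × H₁) →L[ℂ] H₀) = inlL := by
  rw [← adj_inlL, adjoint_adjoint]

lemma adj_sndL : adjoint (sndL : WithLp 2 (H₀ × H₁) →L[ℂ] H₁) = inrL := by
  rw [← adj_inrL, adjoint_adjoint]

lemma comp_eq_zero_of {X : Type*} [NormedAddCommGroup X] [NormedSpace ℂ X]
    (T : X →L[ℂ] WithLp 2 (H₀ × H₁)) (h1 : fstL ∘L T = 0) (h2 : sndL ∘L T = 0) : T = 0 := by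
  have h : (inlL ∘L fstL + inrL ∘L sndL : WithLp 2 (H₀ × H₁) →L[ℂ] WithLp 2 (H₀ × H₁)) ∘L T = T := by
    rw [decompL, ContinuousLinearMap.one_def, ContinuousLinearMap.id_comp]
  rw [← h, add_comp, comp_assoc, comp_assoc, h1, h2, comp_zero, comp_zero, add_zero]

lemma eq_zero_of_blocks (G : WithLp 2 (H₀ × H₁) →L[ℂ] WithLp 2 (H₀ × H₁))
    (h00 : fstL ∘L (G ∘L inlL) = 0) (h10 : sndL ∘L (G ∘L inlL) = 0)
    (h01 : fstL ∘L (G ∘L inrL) = 0) (h11 : sndL ∘L (G ∘L inrL) = 0) : G = 0 := by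
  have hL : G ∘L inlL = 0 := comp_eq_zero_of _ h00 h10
  have hR : G ∘L inrL = 0 := comp_eq_zero_of _ h01 h11
  have h : G ∘L (inlL ∘L fstL + inrL ∘L sndL : WithLp 2 (H₀ × H₁) →L[ℂ] WithLp 2 (H₀ × H₁)) = G := by
    rw [decompL]
    exact mul_one G
  rw [← h, comp_add, ← comp_assoc, ← comp_assoc, hL, hR, zero_comp, zero_comp, add_zero]

lemma shuffle {X Y : Type*} [NormedAddCommGroup X] [NormedSpace ℂ X]
    [NormedAddCommGroup Y] [NormedSpace ℂ Y]
    (P : WithLp 2 (H₀ × H₁) →L[ℂ] Y) (G : WithLp 2 (H₀ × H₁) →L[ℂ] WithLp 2 (H₀ × H₁))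
    (T : X →L[ℂ] H₁) :
    P ∘L (G ∘L (inrL ∘L T)) = (P ∘L (G ∘L inrL)) ∘L T := by
  simp only [ContinuousLinearMap.comp_assoc]

/-- Proposition (q and r), part (b): for `F` with block-matrix form `[[k, m], [l, w - 1]]`,
`q(F) = 0` if and only if `w` is an isometry, `k* + k + l*l = 0` and `m = -l*w`. -/
theorem qr_proposition_b
    (F : WithLp 2 (H₀ × H₁) →L[ℂ] WithLp 2 (H₀ × H₁))
    (k : H₀ →L[ℂ] H₀) (l : H₀ →L[ℂ] H₁) (m : H₁ →L[ℂ] H₀) (w : H₁ →L[ℂ] H₁)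
    (hk : fstL ∘L (F ∘L inlL) = k) (hl : sndL ∘L (F ∘L inlL) = l)
    (hm : fstL ∘L (F ∘L inrL) = m) (hw : sndL ∘L (F ∘L inrL) = w - 1) :
    qOp F = 0 ↔
      (star w * w = 1 ∧ star k + k + adjoint l ∘L l = 0 ∧ m = -(adjoint l ∘L w)) := by
  have hks : fstL ∘L (star F ∘L inlL) = star k := by
    rw [star_eq_adjoint, star_eq_adjoint, ← hk, adjoint_comp, adjoint_comp, adj_inlL, adj_fstL,
      ContinuousLinearMap.comp_assoc]
  have hls : fstL ∘L (star F ∘L inrL) = adjoint l := by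
    rw [star_eq_adjoint, ← hl, adjoint_comp, adjoint_comp, adj_inlL, adj_sndL,
      ContinuousLinearMap.comp_assoc]
  have hms : sndL ∘L (star F ∘L inlL) = adjoint m := by
    rw [star_eq_adjoint, ← hm, adjoint_comp, adjoint_comp, adj_inrL, adj_fstL,
      ContinuousLinearMap.comp_assoc]
  have hws : sndL ∘L (star F ∘L inrL) = adjoint w - 1 := by
    have h1 : adjoint w - 1 = adjoint (w - 1) := by
      rw [map_sub, ContinuousLinearMap.one_def, ContinuousLinearMap.adjoint_id]
    rw [h1, star_eq_adjoint, ← hw, adjoint_comp, adjoint_comp, adj_inrL, adj_sndL,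
      ContinuousLinearMap.comp_assoc]
  have e00 : fstL ∘L (qOp F ∘L inlL) = star k + k + adjoint l ∘L l := by
    simp only [qOp, Delta, ContinuousLinearMap.mul_def, add_comp, comp_add,
      ContinuousLinearMap.comp_assoc]
    rw [hl, shuffle, hls, hks, hk]
  have e10 : sndL ∘L (qOp F ∘L inlL) = adjoint m + adjoint w ∘L l := by
    simp only [qOp, Delta, ContinuousLinearMap.mul_def, add_comp, comp_add,
      ContinuousLinearMap.comp_assoc]
    rw [hl, shuffle, hws, hms, sub_comp, ContinuousLinearMap.one_def,
      ContinuousLinearMap.id_comp]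
    abel
  have e01 : fstL ∘L (qOp F ∘L inrL) = m + adjoint l ∘L w := by
    simp only [qOp, Delta, ContinuousLinearMap.mul_def, add_comp, comp_add,
      ContinuousLinearMap.comp_assoc]
    rw [hw, shuffle, hls, hm, comp_sub, ContinuousLinearMap.one_def,
      ContinuousLinearMap.comp_id]
    abel
  have e11 : sndL ∘L (qOp F ∘L inrL) = adjoint w ∘L w - 1 := by
    simp only [qOp, Delta, ContinuousLinearMap.mul_def, add_comp, comp_add,
      ContinuousLinearMap.comp_assoc]
    rw [hw, shuffle, hws, sub_comp, comp_sub, comp_sub, ContinuousLinearMap.one_def,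
      ContinuousLinearMap.id_comp, ContinuousLinearMap.comp_id]
    simp only [ContinuousLinearMap.id_comp, ContinuousLinearMap.comp_id]
    abel
  constructor
  · intro h
    have z00 : fstL ∘L (qOp F ∘L inlL) = 0 := by rw [h, zero_comp, comp_zero]
    have z01 : fstL ∘L (qOp F ∘L inrL) = 0 := by rw [h, zero_comp, comp_zero]
    have z11 : sndL ∘L (qOp F ∘L inrL) = 0 := by rw [h, zero_comp, comp_zero]
    refine ⟨?_, e00.symm.trans z00, ?_⟩
    · have := e11.symm.trans z11
      rw [star_eq_adjoint, ContinuousLinearMap.mul_def]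
      exact sub_eq_zero.mp this
    · exact eq_neg_of_add_eq_zero_left (e01.symm.trans z01)
  · rintro ⟨h1, h2, h3⟩
    apply eq_zero_of_blocks
    · rw [e00]; exact h2
    · rw [e10, h3, map_neg, adjoint_comp, adjoint_adjoint]
      simp
    · rw [e01, h3]
      simp
    · rw [e11, ← ContinuousLinearMap.mul_def, ← star_eq_adjoint, h1, sub_self]
end
end

section
/- Cor: Let H₀, H₁ be complex Hilbert spaces, H := H₀ ⊕ H₁, and let F ∈ B(H) have block-matrix form [[k, m], [l, w − 1]]. Suppose that m = −l*w or l = −w m*. Then there exists β ∈ ℝ such that q(F) ≤ β·Δ⊥ if and only if w is a contraction. -/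
set_option synthInstance.maxHeartbeats 1000000
set_option maxHeartbeats 1000000

noncomputable section

open ContinuousLinearMap

variable {H₀ H₁ : Type*} [NormedAddCommGroup H₀] [InnerProductSpace ℂ H₀] [CompleteSpace H₀]
  [NormedAddCommGroup H₁] [InnerProductSpace ℂ H₁] [CompleteSpace H₁]

/-! Writing `z = (x, y)`, the quadratic form of `q(F)` is
`2 Re⟪k x, x⟫ + 2 Re⟪m y, x⟫ + ‖l x + w y‖² - ‖y‖²`. At `x = 0` it is `‖w y‖² - ‖y‖²`, so a bound
`q(F) ≤ β Δ⊥` forces `‖w‖ ≤ 1`. Conversely, each of the two relations absorbs the cross term: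
if `m = -l* w` then `2 Re⟪m y, x⟫ + ‖l x + w y‖² = ‖l x‖² + ‖w y‖²`, and if `l = -w m*` then
`l x + w y = w (y - m* x)` with `‖y - m* x‖² = ‖y‖² - 2 Re⟪m y, x⟫ + ‖m* x‖²`. Once `‖w‖ ≤ 1`,
what remains is bounded by a multiple of `‖x‖²`. -/

open scoped InnerProductSpace
open RCLike

namespace ContinuousLinearMap

variable {𝕜 E F : Type*}

theorem norm_apply_sq_le [NontriviallyNormedField 𝕜] [SeminormedAddCommGroup E]
    [SeminormedAddCommGroup F] [NormedSpace 𝕜 E] [NormedSpace 𝕜 F] (f : E →L[𝕜] F) (x : E) :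
    ‖f x‖ ^ 2 ≤ ‖f‖ ^ 2 * ‖x‖ ^ 2 := by
  rw [← mul_pow]
  gcongr
  exact f.le_opNorm x

theorem norm_apply_sq_le_of_norm_le_one [NontriviallyNormedField 𝕜] [SeminormedAddCommGroup E]
    [SeminormedAddCommGroup F] [NormedSpace 𝕜 E] [NormedSpace 𝕜 F] {f : E →L[𝕜] F}
    (hf : ‖f‖ ≤ 1) (x : E) : ‖f x‖ ^ 2 ≤ ‖x‖ ^ 2 := by
  gcongr
  simpa using f.le_of_opNorm_le hf x

theorem re_inner_apply_self_le [RCLike 𝕜] [NormedAddCommGroup E] [InnerProductSpace 𝕜 E]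
    (f : E →L[𝕜] E) (x : E) : re ⟪f x, x⟫_𝕜 ≤ ‖f‖ * ‖x‖ ^ 2 :=
  calc re ⟪f x, x⟫_𝕜 ≤ ‖f x‖ * ‖x‖ := re_inner_le_norm _ _
    _ ≤ ‖f‖ * ‖x‖ * ‖x‖ := by gcongr; exact f.le_opNorm x
    _ = ‖f‖ * ‖x‖ ^ 2 := by ring

theorem le_iff_of_inner_self_eq_ofReal [NormedAddCommGroup E] [InnerProductSpace ℂ E]
    {A B : E →L[ℂ] E} {a b : E → ℝ}
    (ha : ∀ z, ⟪A z, z⟫_ℂ = a z) (hb : ∀ z, ⟪B z, z⟫_ℂ = b z) :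
    A ≤ B ↔ ∀ z, a z ≤ b z := by
  simp only [le_def, isPositive_iff_complex, sub_apply, inner_sub_left, ha, hb,
    ← Complex.ofReal_sub, re_to_complex, Complex.ofReal_re, true_and, sub_nonneg]

end ContinuousLinearMap

section BlockQuadForm

variable {𝕜 E₀ E₁ : Type*} [RCLike 𝕜] [NormedAddCommGroup E₀] [InnerProductSpace 𝕜 E₀]
  [NormedAddCommGroup E₁] [InnerProductSpace 𝕜 E₁]

def blockQuadForm (k : E₀ →L[𝕜] E₀) (l : E₀ →L[𝕜] E₁) (m : E₁ →L[𝕜] E₀) (w : E₁ →L[𝕜] E₁)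
    (x : E₀) (y : E₁) : ℝ :=
  2 * re ⟪k x, x⟫_𝕜 + 2 * re ⟪m y, x⟫_𝕜 + ‖l x + w y‖ ^ 2 - ‖y‖ ^ 2

variable {k : E₀ →L[𝕜] E₀} {l : E₀ →L[𝕜] E₁} {m : E₁ →L[𝕜] E₀} {w : E₁ →L[𝕜] E₁}

@[simp]
lemma blockQuadForm_zero_left (y : E₁) : blockQuadForm k l m w 0 y = ‖w y‖ ^ 2 - ‖y‖ ^ 2 := by
  simp [blockQuadForm]

lemma norm_le_one_of_blockQuadForm_zero_left_nonpos (h : ∀ y, blockQuadForm k l m w 0 y ≤ 0) :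
    ‖w‖ ≤ 1 :=
  w.opNorm_le_bound zero_le_one fun y => by
    have hy := h y
    rw [blockQuadForm_zero_left, sub_nonpos] at hy
    simpa using pow_le_pow_iff_left₀ (norm_nonneg _) (norm_nonneg _) two_ne_zero |>.mp hy

variable [CompleteSpace E₀] [CompleteSpace E₁]

lemma blockQuadForm_le_of_eq_neg_adjoint_comp (hm : m = -(adjoint l ∘L w)) (hw : ‖w‖ ≤ 1)
    (x : E₀) (y : E₁) : blockQuadForm k l m w x y ≤ (2 * ‖k‖ + ‖l‖ ^ 2) * ‖x‖ ^ 2 := by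
  have hmyx : re ⟪m y, x⟫_𝕜 = -re ⟪l x, w y⟫_𝕜 := by
    simp [hm, adjoint_inner_left, inner_re_symm (l x)]
  have hkx := re_inner_apply_self_le k x
  have hlx := norm_apply_sq_le l x
  have hwy := norm_apply_sq_le_of_norm_le_one hw y
  rw [blockQuadForm, hmyx, norm_add_sq (𝕜 := 𝕜)]
  linarith

lemma blockQuadForm_le_of_eq_neg_comp_adjoint (hl : l = -(w ∘L adjoint m)) (hw : ‖w‖ ≤ 1)
    (x : E₀) (y : E₁) :
    blockQuadForm k l m w x y ≤ (2 * ‖k‖ + ‖adjoint m‖ ^ 2) * ‖x‖ ^ 2 := by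
  have hlw : l x + w y = w (y - adjoint m x) := by
    rw [hl, neg_apply, comp_apply, map_sub]
    abel
  have hmyx : re ⟪m y, x⟫_𝕜 = re ⟪y, adjoint m x⟫_𝕜 := by rw [adjoint_inner_right]
  have hkx := re_inner_apply_self_le k x
  have hmx := norm_apply_sq_le (adjoint m) x
  have hwy := norm_apply_sq_le_of_norm_le_one hw (y - adjoint m x)
  rw [norm_sub_sq (𝕜 := 𝕜)] at hwy
  rw [blockQuadForm, hlw, hmyx]
  linarith

end BlockQuadForm

section Blocks

variable {E₀ E₁ : Type*} [NormedAddCommGroup E₀] [InnerProductSpace ℂ E₀]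
  [NormedAddCommGroup E₁] [InnerProductSpace ℂ E₁]

lemma inlL_fst_add_inrL_snd (z : WithLp 2 (E₀ × E₁)) : inlL z.fst + inrL z.snd = z :=
  WithLp.ofLp_injective 2 <| Prod.ext (add_zero _) (zero_add _)

variable {F : WithLp 2 (E₀ × E₁) →L[ℂ] WithLp 2 (E₀ × E₁)} {k : E₀ →L[ℂ] E₀} {l : E₀ →L[ℂ] E₁}
  {m : E₁ →L[ℂ] E₀} {w : E₁ →L[ℂ] E₁}

lemma fst_apply_of_blocks (hk : fstL ∘L (F ∘L inlL) = k) (hm : fstL ∘L (F ∘L inrL) = m)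
    (z : WithLp 2 (E₀ × E₁)) : (F z).fst = k z.fst + m z.snd :=
  calc (F z).fst = (fstL ∘L (F ∘L inlL)) z.fst + (fstL ∘L (F ∘L inrL)) z.snd := by
        conv_lhs => rw [← inlL_fst_add_inrL_snd z, map_add]
        rfl
    _ = k z.fst + m z.snd := by rw [hk, hm]

lemma snd_apply_of_blocks (hl : sndL ∘L (F ∘L inlL) = l) (hw : sndL ∘L (F ∘L inrL) = w - 1)
    (z : WithLp 2 (E₀ × E₁)) : (F z).snd = l z.fst + w z.snd - z.snd :=
  calc (F z).snd = (sndL ∘L (F ∘L inlL)) z.fst + (sndL ∘L (F ∘L inrL)) z.snd := by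
        conv_lhs => rw [← inlL_fst_add_inrL_snd z, map_add]
        rfl
    _ = l z.fst + w z.snd - z.snd := by rw [hl, hw, sub_apply, one_apply_eq_self, add_sub_assoc]

lemma two_mul_re_inner_apply_self_add_norm_sq_snd_eq_blockQuadForm
    (hk : fstL ∘L (F ∘L inlL) = k) (hl : sndL ∘L (F ∘L inlL) = l)
    (hm : fstL ∘L (F ∘L inrL) = m) (hw : sndL ∘L (F ∘L inrL) = w - 1)
    (z : WithLp 2 (E₀ × E₁)) :
    2 * re ⟪F z, z⟫_ℂ + ‖(F z).snd‖ ^ 2 = blockQuadForm k l m w z.fst z.snd := by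
  rw [WithLp.prod_inner_apply, WithLp.ofLp_fst, WithLp.ofLp_fst, WithLp.ofLp_snd,
    WithLp.ofLp_snd, fst_apply_of_blocks hk hm, snd_apply_of_blocks hl hw,
    norm_sub_sq (𝕜 := ℂ), blockQuadForm]
  simp only [inner_add_left, inner_sub_left, map_add, map_sub, inner_self_eq_norm_sq]
  ring

end Blocks

section DirectSum

@[simp] lemma Delta_apply_fst (z : WithLp 2 (H₀ × H₁)) : (Delta H₀ H₁ z).fst = 0 := rfl

@[simp] lemma Delta_apply_snd (z : WithLp 2 (H₀ × H₁)) : (Delta H₀ H₁ z).snd = z.snd := rfl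

lemma inner_Delta_self (z : WithLp 2 (H₀ × H₁)) :
    ⟪Delta H₀ H₁ z, z⟫_ℂ = ((‖z.snd‖ ^ 2 : ℝ) : ℂ) := by
  simp [inner_self_eq_norm_sq_to_K]

lemma inner_DeltaPerp_self (z : WithLp 2 (H₀ × H₁)) :
    ⟪DeltaPerp H₀ H₁ z, z⟫_ℂ = ((‖z.fst‖ ^ 2 : ℝ) : ℂ) := by
  rw [DeltaPerp, sub_apply, one_apply_eq_self, inner_sub_left, inner_Delta_self,
    inner_self_eq_norm_sq_to_K, ← RCLike.ofReal_pow, WithLp.prod_norm_sq_eq_of_L2]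
  simp

lemma inner_qOp_self (F : WithLp 2 (H₀ × H₁) →L[ℂ] WithLp 2 (H₀ × H₁))
    (z : WithLp 2 (H₀ × H₁)) :
    ⟪qOp F z, z⟫_ℂ = ((2 * re ⟪F z, z⟫_ℂ + ‖(F z).snd‖ ^ 2 : ℝ) : ℂ) := by
  simp only [qOp, star_eq_adjoint, add_apply, mul_apply_eq_comp, inner_add_left,
    adjoint_inner_left, inner_Delta_self]
  rw [← inner_conj_symm, add_comm ((starRingEnd ℂ) _), RCLike.add_conj]
  simp

lemma inner_smul_DeltaPerp_self (β : ℝ) (z : WithLp 2 (H₀ × H₁)) :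
    ⟪(β • DeltaPerp H₀ H₁) z, z⟫_ℂ = ((β * ‖z.fst‖ ^ 2 : ℝ) : ℂ) := by
  rw [smul_apply, real_smul_eq_coe_smul (K := ℂ), inner_smul_left, inner_DeltaPerp_self]
  simp

lemma qOp_le_smul_DeltaPerp_iff (F : WithLp 2 (H₀ × H₁) →L[ℂ] WithLp 2 (H₀ × H₁)) (β : ℝ) :
    qOp F ≤ β • DeltaPerp H₀ H₁ ↔
      ∀ z, 2 * re ⟪F z, z⟫_ℂ + ‖(F z).snd‖ ^ 2 ≤ β * ‖z.fst‖ ^ 2 :=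
  le_iff_of_inner_self_eq_ofReal (inner_qOp_self F) (inner_smul_DeltaPerp_self β)

end DirectSum

/-- Corollary (cor CkA), part (b): for `F` with block-matrix form `[[k, m], [l, w - 1]]`,
if `m = -l*w` or `l = -w m*`, then `q(F) ≤ β·Δ⊥` for some `β ∈ ℝ` if and only if `w` is a
contraction. -/
theorem cor_CkA_b
    (F : WithLp 2 (H₀ × H₁) →L[ℂ] WithLp 2 (H₀ × H₁))
    (k : H₀ →L[ℂ] H₀) (l : H₀ →L[ℂ] H₁) (m : H₁ →L[ℂ] H₀) (w : H₁ →L[ℂ] H₁)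
    (hk : fstL ∘L (F ∘L inlL) = k) (hl : sndL ∘L (F ∘L inlL) = l)
    (hm : fstL ∘L (F ∘L inrL) = m) (hw : sndL ∘L (F ∘L inrL) = w - 1)
    (hml : m = -(adjoint l ∘L w) ∨ l = -(w ∘L adjoint m)) :
    (∃ β : ℝ, qOp F ≤ β • DeltaPerp H₀ H₁) ↔ ‖w‖ ≤ 1 := by
  simp_rw [qOp_le_smul_DeltaPerp_iff,
    two_mul_re_inner_apply_self_add_norm_sq_snd_eq_blockQuadForm hk hl hm hw]
  constructor
  · rintro ⟨β, hβ⟩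
    refine norm_le_one_of_blockQuadForm_zero_left_nonpos (k := k) (l := l) (m := m) fun y => ?_
    simpa using hβ (WithLp.toLp 2 (0, y))
  · intro hw1
    rcases hml with hm' | hl'
    · exact ⟨_, fun z => blockQuadForm_le_of_eq_neg_adjoint_comp hm' hw1 z.fst z.snd⟩
    · exact ⟨_, fun z => blockQuadForm_le_of_eq_neg_comp_adjoint hl' hw1 z.fst z.snd⟩
end
end
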